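/- arXiv:2411.08941 — 3 statements merged into one kernel-verified Lean document; each statement's English description precedes it below -/
import Mathlib

section
/- Let f : ℂ → ℂ be ℝ-differentiable at z₀ with Wirtinger derivatives fz and fz̄ at z₀ satisfying |fz| > |fz̄|, and set μ = fz̄/fz. Then, writing u = Re f and v = Im f, the gradients at z₀ satisfy ∇v = B^μ ∇u, where B^μ = (1/(1-|μ|²))·[[2 Im μ, -|1+μ|²],[|1-μ|², -2 Im μ]]. -/
/-!
`μ = fz̄/fz` says that `L` solves the Beltrami equation `fz̄ = μ fz`, which is ℝ-linear in
the partial derivatives of `u` and `v`; its real and imaginary parts form a 2×2 system for `∇v`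
with determinant `1 - |μ|²`, and Cramer's rule gives `∇v = B^μ ∇u`.
-/

open Complex Matrix

noncomputable def beltramiMatrix (μ : ℂ) : Matrix (Fin 2) (Fin 2) ℝ :=
  !![2 * μ.im / (1 - ‖μ‖ ^ 2), -(‖1 + μ‖) ^ 2 / (1 - ‖μ‖ ^ 2);
     (‖1 - μ‖) ^ 2 / (1 - ‖μ‖ ^ 2), -(2 * μ.im) / (1 - ‖μ‖ ^ 2)]

/-- Here `a = fx` and `b = fy`, so the hypothesis reads `fz̄ = μ fz`. -/
theorem im_eq_beltramiMatrix_mulVec_re {μ a b : ℂ} (hμ : ‖μ‖ ≠ 1)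
    (hbeltrami : a + I * b = μ * (a - I * b)) :
    ![a.im, b.im] = beltramiMatrix μ *ᵥ ![a.re, b.re] := by
  have hnorm (z : ℂ) : ‖z‖ ^ 2 = z.re ^ 2 + z.im ^ 2 := by
    rw [Complex.sq_norm, normSq_apply]; ring
  have hD : 1 - (μ.re ^ 2 + μ.im ^ 2) ≠ 0 := by
    rw [← hnorm, sub_ne_zero, ne_comm, Ne, pow_eq_one_iff_of_nonneg (norm_nonneg μ) two_ne_zero]
    exact hμ
  have hre := congrArg re hbeltrami
  have him := congrArg im hbeltrami
  simp only [add_re, add_im, sub_re, sub_im, mul_re, mul_im, I_re, I_im,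
    zero_mul, one_mul, zero_sub, zero_add] at hre him
  ext i
  fin_cases i <;>
    simp only [beltramiMatrix, mulVec, dotProduct, Fin.sum_univ_two, hnorm, Fin.zero_eta,
      Fin.mk_one, cons_val_zero, cons_val_one, of_apply, div_mul_eq_mul_div,
      add_re, add_im, sub_re, sub_im, one_re, one_im] <;>
    rw [← add_div, eq_div_iff hD]
  · linear_combination (-μ.im) * hre + (1 + μ.re) * him
  · linear_combination (μ.re - 1) * hre + μ.im * him

theorem grad_v_eq_Bmu_grad_u_general (L : ℂ →L[ℝ] ℂ)
    (fz fzb : ℂ)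
    (hfz : fz = (L 1 - Complex.I * L Complex.I) / 2)
    (hfzb : fzb = (L 1 + Complex.I * L Complex.I) / 2)
    (h : ‖fzb‖ < ‖fz‖)
    (μ : ℂ) (hμ : μ = fzb / fz) :
    ![(L 1).im, (L Complex.I).im] =
      Matrix.mulVec
        !![2 * μ.im / (1 - ‖μ‖ ^ 2),
            -(‖1 + μ‖) ^ 2 / (1 - ‖μ‖ ^ 2);
           (‖1 - μ‖) ^ 2 / (1 - ‖μ‖ ^ 2),
            -(2 * μ.im) / (1 - ‖μ‖ ^ 2)]
        ![(L 1).re, (L Complex.I).re] := by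
  have hfz0 : fz ≠ 0 := norm_pos_iff.mp ((norm_nonneg fzb).trans_lt h)
  have hμ_lt_one : ‖μ‖ < 1 := by
    rwa [hμ, norm_div, div_lt_one (norm_pos_iff.mpr hfz0)]
  refine im_eq_beltramiMatrix_mulVec_re hμ_lt_one.ne ?_
  rw [hμ, div_mul_eq_mul_div, eq_div_iff hfz0]
  linear_combination (2 * fzb) * hfz - (2 * fz) * hfzb

/-- If `f` is ℝ-differentiable at `z₀` with Wirtinger derivatives `fz, fz̄` satisfying
`|fz| > |fz̄|`, and `μ = fz̄/fz`, then the gradients of `u = Re f`, `v = Im f` at `z₀`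
satisfy `∇v = B^μ ∇u`. -/
theorem grad_v_eq_Bmu_grad_u (f : ℂ → ℂ) (z₀ : ℂ) (L : ℂ →L[ℝ] ℂ)
    (hf : HasFDerivAt f L z₀)
    (fz fzb : ℂ)
    (hfz : fz = (L 1 - Complex.I * L Complex.I) / 2)
    (hfzb : fzb = (L 1 + Complex.I * L Complex.I) / 2)
    (h : ‖fzb‖ < ‖fz‖)
    (μ : ℂ) (hμ : μ = fzb / fz) :
    ![(L 1).im, (L Complex.I).im] =
      Matrix.mulVec
        !![2 * μ.im / (1 - ‖μ‖ ^ 2),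
            -(‖1 + μ‖) ^ 2 / (1 - ‖μ‖ ^ 2);
           (‖1 - μ‖) ^ 2 / (1 - ‖μ‖ ^ 2),
            -(2 * μ.im) / (1 - ‖μ‖ ^ 2)]
        ![(L 1).re, (L Complex.I).re] :=
  grad_v_eq_Bmu_grad_u_general L fz fzb hfz hfzb h μ hμ
end

section
/- Let B be a real 2×2 matrix with det B = 1, b₂₂ = -b₁₁, b₁₂ < 0 and b₂₁ > 0, and set μ = μ_B = (b₁₂ + b₂₁ - 2i b₁₁)/(b₁₂ - b₂₁ - 2). Then the matrix B^μ = (1/(1-|μ|²))·[[2 Im μ, -|1+μ|²],[|1-μ|², -2 Im μ]] equals B. -/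
/-!
Write `d = b₁₂ - b₂₁ - 2`, which is negative, so that `μ = ((b₁₂ + b₂₁) - 2 b₁₁ i) / d`.
Using `b₁₁² + b₁₂ b₂₁ = -1`, a direct computation gives `1 - |μ|² = -4 / d`,
`|1 + μ|² = 4 b₁₂ / d` and `|1 - μ|² = -4 b₂₁ / d`, while `Im μ = -2 b₁₁ / d`;
in every entry of `B^μ` the factor `d` then cancels and leaves the corresponding entry of `B`.
-/

open Complex

noncomputable def muB (b11 b12 b21 : ℝ) : ℂ :=
  (b12 + b21 - 2 * I * b11) / (b12 - b21 - 2)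

section
variable (b11 b12 b21 : ℝ)

lemma muB_eq_div_ofReal :
    muB b11 b12 b21 = (b12 + b21 - 2 * I * b11) / ((b12 - b21 - 2 : ℝ) : ℂ) := by
  push_cast; rfl

lemma muB_re : (muB b11 b12 b21).re = (b12 + b21) / (b12 - b21 - 2) := by
  rw [muB_eq_div_ofReal, div_ofReal_re]; simp

lemma muB_im : (muB b11 b12 b21).im = -2 * b11 / (b12 - b21 - 2) := by
  rw [muB_eq_div_ofReal, div_ofReal_im]; simp [neg_div]

variable {b11 b12 b21} (h : b11 * b11 + b12 * b21 = -1) (hd : b12 - b21 - 2 ≠ 0)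
include h hd

lemma one_sub_sq_norm_muB : 1 - ‖muB b11 b12 b21‖ ^ 2 = -4 / (b12 - b21 - 2) := by
  rw [← normSq_eq_norm_sq, normSq_apply, muB_re, muB_im]
  field_simp
  linear_combination (-4) * h

lemma sq_norm_one_add_muB : ‖1 + muB b11 b12 b21‖ ^ 2 = 4 * b12 / (b12 - b21 - 2) := by
  rw [← normSq_eq_norm_sq, normSq_apply, add_re, add_im, one_re, one_im, muB_re, muB_im]
  field_simp
  linear_combination 4 * h

lemma sq_norm_one_sub_muB : ‖1 - muB b11 b12 b21‖ ^ 2 = -4 * b21 / (b12 - b21 - 2) := by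
  rw [← normSq_eq_norm_sq, normSq_apply, sub_re, sub_im, one_re, one_im, muB_re, muB_im]
  field_simp
  linear_combination 4 * h

end

/-- If `det B = 1`, `b₂₂ = -b₁₁`, `b₁₂ < 0`, `b₂₁ > 0`, and `μ = μ_B`,
then `B^μ = B`. -/
theorem Bmu_of_muB_eq (b11 b12 b21 b22 : ℝ)
    (hdet : b11 * b22 - b12 * b21 = 1) (hb22 : b22 = -b11)
    (hb12 : b12 < 0) (hb21 : b21 > 0)
    (μ : ℂ) (hμ : μ = (↑b12 + ↑b21 - 2 * Complex.I * ↑b11) / (↑b12 - ↑b21 - 2)) :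
    !![2 * μ.im / (1 - ‖μ‖ ^ 2),
        -(‖1 + μ‖) ^ 2 / (1 - ‖μ‖ ^ 2);
       (‖1 - μ‖) ^ 2 / (1 - ‖μ‖ ^ 2),
        -(2 * μ.im) / (1 - ‖μ‖ ^ 2)] = !![b11, b12; b21, b22] := by
  subst hb22
  obtain rfl : μ = muB b11 b12 b21 := hμ
  have h : b11 * b11 + b12 * b21 = -1 := by linear_combination -hdet
  have hd : b12 - b21 - 2 ≠ 0 := by linarith
  rw [one_sub_sq_norm_muB h hd, sq_norm_one_add_muB h hd, sq_norm_one_sub_muB h hd, muB_im]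
  field_simp
  norm_num
end

section
/- Let D ⊆ ℝ² be open, u, v : D → ℝ have partial derivatives at a point Z₀ ∈ D, and suppose ∇v(Z₀) = B ∇u(Z₀) for a matrix B with det B = 1, b₂₂ = -b₁₁, b₁₂ < 0, b₂₁ > 0. Assume ∇u(Z₀) ≠ 0. Then the function f = u + iv satisfies the Beltrami relation fz̄ = μ_B · fz at Z₀, where μ_B = (b₁₂ + b₂₁ - 2i b₁₁)/(b₁₂ - b₂₁ - 2). -/
/-!
After substituting `∇v = B ∇u` with `b₂₂ = -b₁₁`, the two sides of the cross-multiplied relation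
`2 f_z̄ · (b₁₂ - b₂₁ - 2) = (b₁₂ + b₂₁ - 2i b₁₁) · 2 f_z` differ by `2 (u_x + i u_y) (det B - 1)`.
The sign conditions make the real denominator `b₁₂ - b₂₁ - 2` negative, so one may divide by it.
-/

open Complex

theorem wirtinger_mul_eq_of_gradient_eq_mul {ux uy vx vy a b c : ℝ}
    (hdet : a * -a - b * c = 1)
    (hvx : vx = a * ux + b * uy) (hvy : vy = c * ux + -a * uy) :
    ((ux + vx * I) + I * (uy + vy * I)) * (b - c - 2) =
      (b + c - 2 * I * a) * ((ux + vx * I) - I * (uy + vy * I)) := by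
  subst hvx hvy
  apply Complex.ext <;>
    simp only [ofReal_add, ofReal_mul, ofReal_neg, neg_re, neg_im, add_re, add_im, sub_re, sub_im,
      mul_re, mul_im, ofReal_re, ofReal_im, I_re, I_im, re_ofNat, im_ofNat]
  · linear_combination 2 * ux * hdet
  · linear_combination 2 * uy * hdet

theorem beltrami_of_generalized_CR_general
    (ux uy vx vy : ℝ)
    (b11 b12 b21 b22 : ℝ)
    (hdet : b11 * b22 - b12 * b21 = 1) (hb22 : b22 = -b11)
    (hb12 : b12 < 0) (hb21 : b21 > 0)
    (hCR1 : vx = b11 * ux + b12 * uy)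
    (hCR2 : vy = b21 * ux + b22 * uy) :
    ((↑ux + ↑vx * Complex.I) + Complex.I * (↑uy + ↑vy * Complex.I)) / 2 =
      ((↑b12 + ↑b21 - 2 * Complex.I * ↑b11) / (↑b12 - ↑b21 - 2)) *
        (((↑ux + ↑vx * Complex.I) - Complex.I * (↑uy + ↑vy * Complex.I)) / 2) := by
  subst hb22
  have hden : (b12 - b21 - 2 : ℂ) ≠ 0 := by
    exact_mod_cast (by linarith : b12 - b21 - 2 < 0).ne
  rw [div_mul_div_comm, div_eq_div_iff two_ne_zero (mul_ne_zero hden two_ne_zero)]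
  linear_combination 2 * wirtinger_mul_eq_of_gradient_eq_mul hdet hCR1 hCR2

/-- If `u, v` have partial derivatives at `Z₀ ∈ D` with `∇v(Z₀) = B ∇u(Z₀)`,
where `det B = 1`, `b₂₂ = -b₁₁`, `b₁₂ < 0`, `b₂₁ > 0`, and `∇u(Z₀) ≠ 0`,
then `f = u + iv` satisfies the Beltrami relation `fz̄ = μ_B · fz` at `Z₀`. -/
theorem beltrami_of_generalized_CR (D : Set (ℝ × ℝ)) (hD : IsOpen D)
    (Z₀ : ℝ × ℝ) (hZ₀ : Z₀ ∈ D)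
    (u v : ℝ × ℝ → ℝ) (ux uy vx vy : ℝ)
    (hux : HasDerivAt (fun t => u (t, Z₀.2)) ux Z₀.1)
    (huy : HasDerivAt (fun t => u (Z₀.1, t)) uy Z₀.2)
    (hvx : HasDerivAt (fun t => v (t, Z₀.2)) vx Z₀.1)
    (hvy : HasDerivAt (fun t => v (Z₀.1, t)) vy Z₀.2)
    (b11 b12 b21 b22 : ℝ)
    (hdet : b11 * b22 - b12 * b21 = 1) (hb22 : b22 = -b11)
    (hb12 : b12 < 0) (hb21 : b21 > 0)
    (hCR1 : vx = b11 * ux + b12 * uy)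
    (hCR2 : vy = b21 * ux + b22 * uy)
    (hgrad : (ux, uy) ≠ (0, 0)) :
    ((↑ux + ↑vx * Complex.I) + Complex.I * (↑uy + ↑vy * Complex.I)) / 2 =
      ((↑b12 + ↑b21 - 2 * Complex.I * ↑b11) / (↑b12 - ↑b21 - 2)) *
        (((↑ux + ↑vx * Complex.I) - Complex.I * (↑uy + ↑vy * Complex.I)) / 2) :=
  beltrami_of_generalized_CR_general ux uy vx vy b11 b12 b21 b22 hdet hb22 hb12 hb21 hCR1 hCR2
end
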